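/- Let S be a finite semigroup satisfying eafuebf = ebfueaf for all idempotents e, f and elements a, u, b, acting on the right on a set Q, and assume the action satisfies: for all x, y ∈ Q jointly fixed by a common idempotent, if x and y are mutually reachable then x = y. Suppose p, s, r ∈ Q with p·e = p, s·e = s for an idempotent e, and p ⪰ r ⪰ s, and suppose r₁ ∈ Q satisfies p·e' = p, r₁·e' = r₁ for some idempotent e' and r ⪰ r₁. Then r₁·e and r₁ are mutually reachable: r₁ ⪰ r₁·e and r₁·e ⪰ r₁. -/

import Mathlib

/-! The identity `e a f u e b f = e b f u e a f` with `e = f` and `u = e` makes every local monoid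
`e S e` commutative. If `p` is fixed by the idempotents `e` and `e'` and reaches `r₁ = r₁ e'`, then
`r₁ = p t` with `t ∈ e' S e'`, and `t` commutes with `e' e e'`; hence
`r₁ e e' = p (t e' e e') = p (e' e e' t) = p t = r₁`. -/

theorem localMonoid_mul_comm {S : Type*} [Semigroup S]
    (hid : ∀ e f a u b : S, e * e = e → f * f = f →
      e * a * f * u * e * b * f = e * b * f * u * e * a * f)
    {e : S} (he : e * e = e) (a b : S) :
    e * a * e * (e * b * e) = e * b * e * (e * a * e) := by
  have h := hid e e a e b he he
  simp only [mul_assoc, he] at h ⊢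
  simpa only [← mul_assoc, he] using h

section Action

variable {S Q : Type*} [Semigroup S] (act : Q → S → Q)

/-- The paper's `x ⪰ y`. -/
def Reaches (x y : Q) : Prop := x = y ∨ ∃ w, act x w = y

variable {act} (hact : ∀ q s t, act (act q s) t = act q (s * t))
include hact

theorem Reaches.trans {x y z : Q} (hxy : Reaches act x y) (hyz : Reaches act y z) :
    Reaches act x z := by
  rcases hxy with rfl | ⟨v, rfl⟩
  · exact hyz
  · rcases hyz with rfl | ⟨w, rfl⟩
    · exact Or.inr ⟨v, rfl⟩
    · exact Or.inr ⟨v * w, (hact x v w).symm⟩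

theorem exists_localMonoid_act_eq {e' : S} {p r : Q}
    (hpe' : act p e' = p) (hre' : act r e' = r) (hpr : Reaches act p r) :
    ∃ t, act p (e' * t * e') = r := by
  rcases hpr with rfl | ⟨w, rfl⟩
  · exact ⟨e', by rw [← hact, ← hact, hpe', hpe', hpe']⟩
  · exact ⟨w, by rw [← hact, ← hact, hpe', hre']⟩

theorem act_act_eq_self_of_reaches
    (hid : ∀ e f a u b : S, e * e = e → f * f = f →
      e * a * f * u * e * b * f = e * b * f * u * e * a * f)
    {e e' : S} (he' : e' * e' = e') {p r : Q} (hpe : act p e = p)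
    (hpe' : act p e' = p) (hre' : act r e' = r) (hpr : Reaches act p r) :
    act (act r e) e' = r := by
  obtain ⟨t, rfl⟩ := exists_localMonoid_act_eq hact hpe' hre' hpr
  calc act (act (act p (e' * t * e')) e) e'
      = act p (e' * t * e' * (e' * e * e')) := by
        simp only [hact, mul_assoc]
        rw [← mul_assoc e' e' (e * e'), he']
    _ = act p (e' * e * e' * (e' * t * e')) := by rw [localMonoid_mul_comm hid he']
    _ = act p (e' * t * e') := by
        rw [← hact, ← hact p (e' * e), ← hact p e', hpe', hpe, hpe']

end Action

theorem stmt15_general {S Q : Type*} [Semigroup S]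
    (act : Q → S → Q)
    (hact : ∀ q s t, act (act q s) t = act q (s * t))
    (hid : ∀ e f a u b : S, e * e = e → f * f = f →
      e * a * f * u * e * b * f = e * b * f * u * e * a * f)
    (p s r r₁ : Q) (e e' : S)
    (he' : e' * e' = e')
    (hpe : act p e = p)
    (hpr : p = r ∨ ∃ w, act p w = r)
    (hpe' : act p e' = p) (hr1e' : act r₁ e' = r₁)
    (hrr1 : r = r₁ ∨ ∃ w, act r w = r₁) :
    (r₁ = act r₁ e ∨ ∃ w, act r₁ w = act r₁ e) ∧
    (act r₁ e = r₁ ∨ ∃ w, act (act r₁ e) w = r₁) :=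
  ⟨Or.inr ⟨e, rfl⟩,
    Or.inr ⟨e', act_act_eq_self_of_reaches hact hid he' hpe hpe' hr1e'
      (Reaches.trans hact hpr hrr1)⟩⟩

theorem stmt15 {S Q : Type*} [Semigroup S] [Fintype S]
    (act : Q → S → Q)
    (hact : ∀ q s t, act (act q s) t = act q (s * t))
    (hid : ∀ e f a u b : S, e * e = e → f * f = f →
      e * a * f * u * e * b * f = e * b * f * u * e * a * f)
    (hcond1 : ∀ (x y : Q) (j : S), j * j = j → act x j = x → act y j = y →
      (x = y ∨ ∃ w, act x w = y) → (y = x ∨ ∃ w, act y w = x) → x = y)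
    (p s r r₁ : Q) (e e' : S)
    (he : e * e = e) (he' : e' * e' = e')
    (hpe : act p e = p) (hse : act s e = s)
    (hpr : p = r ∨ ∃ w, act p w = r) (hrs : r = s ∨ ∃ w, act r w = s)
    (hpe' : act p e' = p) (hr1e' : act r₁ e' = r₁)
    (hrr1 : r = r₁ ∨ ∃ w, act r w = r₁) :
    (r₁ = act r₁ e ∨ ∃ w, act r₁ w = act r₁ e) ∧
    (act r₁ e = r₁ ∨ ∃ w, act (act r₁ e) w = r₁) :=
  stmt15_general act hact hid p s r r₁ e e' he' hpe hpr hpe' hr1e' hrr1
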